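/- Let Γ be a countable group with finite generating set Y and let G be a countable group with finite generating set X having the rapid decay property with polynomial P. Let R ≥ 1, m ≥ 1 be integers, let r' ∈ ℕ, and let φ : Γ → G be a group homomorphism that is injective on B_Y(2mR) and satisfies φ(B_Y(2mR)) ⊆ B_X(r'). Then for every x ∈ ℂΓ supported on B_Y(R), ‖φ(x)‖^{2m} ≤ P(r')·‖x‖^{2m}, where the norms are the reduced operator norms on ℂG and ℂΓ respectively and φ also denotes the induced linear map ℂΓ → ℂG. -/

import Mathlib

/-!
Write `z = φ(x)` and `w = x* x`. The C*-identity `‖y* y‖ = ‖y‖²`, which comes from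
`⟪x y, x y⟫ = ⟪y, x* x y⟫` in `ℓ²(Γ)`, implies `‖a ^ m‖ = ‖a‖ ^ m` for self-adjoint `a`; hence
`‖z‖ ^ 2m = ‖(z* z) ^ m‖ = ‖φ(w ^ m)‖`. Since `w ^ m` is supported in `B_Y(2mR)`, where `φ` is
injective with image in `B_X(r')`, rapid decay of `G` gives
`‖φ(w ^ m)‖ ≤ P(r') ‖φ(w ^ m)‖₂ = P(r') ‖w ^ m‖₂ ≤ P(r') ‖w ^ m‖ = P(r') ‖x‖ ^ 2m`.
-/

open Filter Monoid

/-- `wordBall T r`: elements of `K` expressible as a product of at most `r` elements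
of `T ∪ T⁻¹` (so `1 ∈ wordBall T 0`). -/
def wordBall {K : Type*} [Group K] (T : Set K) (r : ℝ) : Set K :=
  {g | ∃ l : List K, (l.length : ℝ) ≤ r ∧ (∀ x ∈ l, x ∈ T ∨ x⁻¹ ∈ T) ∧ l.prod = g}

/-- The ℓ¹-norm on the complex group algebra. -/
noncomputable def groupAlgNorm1 {Γ : Type*} [Group Γ] (x : MonoidAlgebra ℂ Γ) : ℝ :=
  ∑ g ∈ x.coeff.support, ‖x.coeff g‖

/-- The ℓ²-norm on the complex group algebra. -/
noncomputable def groupAlgNorm2 {Γ : Type*} [Group Γ] (x : MonoidAlgebra ℂ Γ) : ℝ :=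
  Real.sqrt (∑ g ∈ x.coeff.support, (‖x.coeff g‖) ^ 2)

/-- The reduced operator norm on the complex group algebra:
`‖x‖ = sup {‖x·y‖₂ : y ∈ ℂΓ, ‖y‖₂ ≤ 1}`. -/
noncomputable def groupAlgOpNorm {Γ : Type*} [Group Γ] (x : MonoidAlgebra ℂ Γ) : ℝ :=
  sSup {r : ℝ | ∃ y : MonoidAlgebra ℂ Γ, groupAlgNorm2 y ≤ 1 ∧ r = groupAlgNorm2 (x * y)}

/-- The linear extension of a group homomorphism `φ : Γ → G` to `ℂΓ → ℂG`. -/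
noncomputable def groupAlgMap {Γ G : Type*} [Group Γ] [Group G] (φ : Γ →* G)
    (x : MonoidAlgebra ℂ Γ) : MonoidAlgebra ℂ G :=
  MonoidAlgebra.ofCoeff (Finsupp.mapDomain φ x.coeff)

/-- `(G, X)` has the rapid decay property with polynomial `P` if `‖b‖ ≤ P(r)·‖b‖₂`
for every `r ∈ ℕ` and every `b ∈ ℂG` supported on `B_X(r)`. -/
def RapidDecayWith {G : Type*} [Group G] (X : Set G) (P : Polynomial ℝ) : Prop :=
  ∀ r : ℕ, ∀ b : MonoidAlgebra ℂ G, (↑b.coeff.support : Set G) ⊆ wordBall X r →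
    groupAlgOpNorm b ≤ P.eval (r : ℝ) * groupAlgNorm2 b

/-- `(G, X)` has the rapid decay property. -/
def RapidDecay {G : Type*} [Group G] (X : Set G) : Prop :=
  ∃ P : Polynomial ℝ, RapidDecayWith X P

/-- Given `ι : G → Γ`, the group `Γ` is *existentially C*-residually-`G`* if for every
finite `S ⊆ Γ` and `ε > 0` there is a homomorphism `φ : Γ → G` with `φ ∘ ι = id_G` and
`‖φ(z)‖ ≤ ‖z‖ + ε` for every `z ∈ ℂΓ` supported on `S` with `‖z‖₁ = 1`. -/
def ExistentiallyCstarResidually {G Γ : Type*} [Group G] [Group Γ] (ι : G →* Γ) : Prop :=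
  ∀ S : Finset Γ, ∀ ε : ℝ, 0 < ε →
    ∃ φ : Γ →* G, (∀ g : G, φ (ι g) = g) ∧
      ∀ z : MonoidAlgebra ℂ Γ, (↑z.coeff.support : Set Γ) ⊆ (↑S : Set Γ) →
        groupAlgNorm1 z = 1 →
        groupAlgOpNorm (groupAlgMap φ z) ≤ groupAlgOpNorm z + ε

open MonoidAlgebra

section WordBall

variable {K : Type*} [Group K] {T : Set K} {r s : ℝ} {g h : K}

theorem one_mem_wordBall (hr : 0 ≤ r) : (1 : K) ∈ wordBall T r :=
  ⟨[], by simpa using hr, by simp, rfl⟩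

theorem mul_mem_wordBall (hg : g ∈ wordBall T r) (hh : h ∈ wordBall T s) :
    g * h ∈ wordBall T (r + s) := by
  obtain ⟨l, hl, hlT, rfl⟩ := hg
  obtain ⟨l', hl', hlT', rfl⟩ := hh
  refine ⟨l ++ l', by push_cast [List.length_append]; linarith, fun x hx => ?_, List.prod_append⟩
  rcases List.mem_append.mp hx with hx | hx
  exacts [hlT x hx, hlT' x hx]

theorem inv_mem_wordBall (hg : g ∈ wordBall T r) : g⁻¹ ∈ wordBall T r := by
  obtain ⟨l, hl, hlT, rfl⟩ := hg
  refine ⟨(l.map (·⁻¹)).reverse, by simpa using hl, ?_, (List.prod_inv_reverse l).symm⟩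
  simp only [List.mem_reverse, List.mem_map, forall_exists_index, and_imp]
  rintro _ y hy rfl
  simpa [or_comm] using hlT y hy

end WordBall

namespace MonoidAlgebra

section Star

variable {R G : Type*} [Semiring R] [StarRing R] [Group G]

noncomputable instance : Star (MonoidAlgebra R G) where
  star x := ofCoeff ((x.coeff.mapRange star (star_zero R)).equivMapDomain (Equiv.inv G))

@[simp]
theorem coeff_star_apply (x : MonoidAlgebra R G) (g : G) : (star x).coeff g = star (x.coeff g⁻¹) :=
  rfl

noncomputable instance : StarAddMonoid (MonoidAlgebra R G) where
  star_involutive x := by ext; simp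
  star_add x y := by ext; simp

theorem star_single (g : G) (r : R) : star (single g r) = single g⁻¹ (star r) := by
  classical
  ext h
  rw [coeff_star_apply, coeff_single, coeff_single, Finsupp.single_apply, Finsupp.single_apply]
  simp only [inv_eq_iff_eq_inv, eq_comm (a := g)]
  split_ifs <;> simp

noncomputable instance : StarRing (MonoidAlgebra R G) where
  star_add := star_add
  star_mul x y := by
    induction x using induction_linear with
    | zero => simp
    | add x₁ x₂ h₁ h₂ => rw [add_mul, star_add, h₁, h₂, star_add, mul_add]
    | single g r =>
      induction y using induction_linear with
      | zero => simp
      | add y₁ y₂ h₁ h₂ => rw [mul_add, star_add, h₁, h₂, star_add, add_mul]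
      | single h s => simp [star_single, single_mul_single]

end Star

section L2

variable {M : Type*}

noncomputable def toL2 : MonoidAlgebra ℂ M →ₗ[ℂ] lp (fun _ : M => ℂ) 2 where
  toFun x := ⟨⇑x.coeff, (memℓp_zero x.coeff.hasFiniteSupport).of_exponent_ge (by simp)⟩
  map_add' _ _ := rfl
  map_smul' _ _ := rfl

@[simp]
theorem toL2_apply (x : MonoidAlgebra ℂ M) (g : M) : toL2 x g = x.coeff g := rfl

theorem toL2_injective : Function.Injective (toL2 : MonoidAlgebra ℂ M → _) :=
  fun _ _ h => ext (Finsupp.ext fun g => congrArg (fun v : lp _ 2 => v g) h)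

theorem norm_toL2_sq (x : MonoidAlgebra ℂ M) : ‖toL2 x‖ ^ 2 = ∑' g, ‖x.coeff g‖ ^ 2 := by
  simpa using lp.norm_rpow_eq_tsum (p := 2) (by simp) (toL2 x)

theorem inner_toL2 (x y : MonoidAlgebra ℂ M) :
    inner ℂ (toL2 x) (toL2 y) = ∑' g, star (x.coeff g) * y.coeff g := by
  simp [lp.inner_eq_tsum, mul_comm]

variable {Γ : Type*} [Group Γ]

theorem norm_toL2_single_mul (g : Γ) (c : ℂ) (y : MonoidAlgebra ℂ Γ) :
    ‖toL2 (single g c * y)‖ = ‖c‖ * ‖toL2 y‖ := by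
  refine (pow_left_inj₀ (norm_nonneg _) (by positivity) two_ne_zero).mp ?_
  rw [norm_toL2_sq, mul_pow, norm_toL2_sq, ← tsum_mul_left, ← (Equiv.mulLeft g).tsum_eq]
  simp [mul_pow]

theorem inner_toL2_single_mul (g : Γ) (c : ℂ) (y z : MonoidAlgebra ℂ Γ) :
    inner ℂ (toL2 (single g c * y)) (toL2 z) =
      inner ℂ (toL2 y) (toL2 (single g⁻¹ (star c) * z)) := by
  rw [inner_toL2, inner_toL2, ← (Equiv.mulLeft g).tsum_eq]
  simp only [Equiv.coe_mulLeft, coeff_single_mul_apply, inv_mul_cancel_left, star_mul, inv_inv,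
    mul_assoc]

theorem inner_toL2_mul_left (x y z : MonoidAlgebra ℂ Γ) :
    inner ℂ (toL2 (x * y)) (toL2 z) = inner ℂ (toL2 y) (toL2 (star x * z)) := by
  induction x using induction_linear with
  | zero => simp
  | add x₁ x₂ h₁ h₂ =>
    simp only [add_mul, star_add, map_add, inner_add_left, inner_add_right, h₁, h₂]
  | single g c => rw [star_single, inner_toL2_single_mul]

end L2

end MonoidAlgebra

section GroupAlgNorm2

variable {Γ : Type*} [Group Γ]

theorem groupAlgNorm2_eq_norm_toL2 (x : MonoidAlgebra ℂ Γ) : groupAlgNorm2 x = ‖toL2 x‖ := by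
  rw [groupAlgNorm2, ← Real.sqrt_sq (norm_nonneg (toL2 x)), norm_toL2_sq,
    tsum_eq_sum (s := x.coeff.support) (by simp)]

theorem groupAlgNorm2_nonneg (x : MonoidAlgebra ℂ Γ) : 0 ≤ groupAlgNorm2 x :=
  Real.sqrt_nonneg _

theorem groupAlgNorm2_one : groupAlgNorm2 (1 : MonoidAlgebra ℂ Γ) = 1 := by
  simp [groupAlgNorm2, one_def]

theorem groupAlgNorm2_mul_le_groupAlgNorm1_mul (x y : MonoidAlgebra ℂ Γ) :
    groupAlgNorm2 (x * y) ≤ groupAlgNorm1 x * groupAlgNorm2 y := by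
  simp only [groupAlgNorm2_eq_norm_toL2]
  conv_lhs => rw [← sum_coeff_single x]
  rw [Finsupp.sum, Finset.sum_mul, map_sum, groupAlgNorm1, Finset.sum_mul]
  exact (norm_sum_le _ _).trans_eq (Finset.sum_congr rfl fun g _ => norm_toL2_single_mul _ _ _)

theorem groupAlgNorm2_mul_sq_le (x y : MonoidAlgebra ℂ Γ) :
    groupAlgNorm2 (x * y) ^ 2 ≤ groupAlgNorm2 y * groupAlgNorm2 (star x * x * y) := by
  simp only [groupAlgNorm2_eq_norm_toL2]
  calc ‖toL2 (x * y)‖ ^ 2 = RCLike.re (inner ℂ (toL2 (x * y)) (toL2 (x * y))) :=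
        (inner_self_eq_norm_sq _).symm
    _ ≤ ‖inner ℂ (toL2 y) (toL2 (star x * x * y))‖ := by
        rw [inner_toL2_mul_left, ← mul_assoc]; exact RCLike.re_le_norm _
    _ ≤ ‖toL2 y‖ * ‖toL2 (star x * x * y)‖ := norm_inner_le_norm _ _

end GroupAlgNorm2

section OpNorm

variable {Γ : Type*} [Group Γ]

theorem bddAbove_groupAlgOpNorm (x : MonoidAlgebra ℂ Γ) : BddAbove
    {r : ℝ | ∃ y : MonoidAlgebra ℂ Γ, groupAlgNorm2 y ≤ 1 ∧ r = groupAlgNorm2 (x * y)} := by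
  refine ⟨groupAlgNorm1 x, ?_⟩
  rintro _ ⟨y, hy, rfl⟩
  have hx : 0 ≤ groupAlgNorm1 x := Finset.sum_nonneg fun _ _ => norm_nonneg _
  calc groupAlgNorm2 (x * y) ≤ groupAlgNorm1 x * groupAlgNorm2 y :=
        groupAlgNorm2_mul_le_groupAlgNorm1_mul x y
    _ ≤ groupAlgNorm1 x := mul_le_of_le_one_right hx hy

theorem groupAlgNorm2_mul_le_groupAlgOpNorm {x y : MonoidAlgebra ℂ Γ} (hy : groupAlgNorm2 y ≤ 1) :
    groupAlgNorm2 (x * y) ≤ groupAlgOpNorm x :=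
  le_csSup (bddAbove_groupAlgOpNorm x) ⟨y, hy, rfl⟩

theorem groupAlgOpNorm_le {x : MonoidAlgebra ℂ Γ} {C : ℝ}
    (h : ∀ y, groupAlgNorm2 y ≤ 1 → groupAlgNorm2 (x * y) ≤ C) : groupAlgOpNorm x ≤ C :=
  csSup_le ⟨_, 0, by simp [groupAlgNorm2], rfl⟩ fun _ ⟨y, hy, hr⟩ => hr ▸ h y hy

theorem groupAlgOpNorm_nonneg (x : MonoidAlgebra ℂ Γ) : 0 ≤ groupAlgOpNorm x :=
  (groupAlgNorm2_nonneg _).trans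
    (groupAlgNorm2_mul_le_groupAlgOpNorm (y := 0) (by simp [groupAlgNorm2]))

theorem groupAlgNorm2_mul_le (x y : MonoidAlgebra ℂ Γ) :
    groupAlgNorm2 (x * y) ≤ groupAlgOpNorm x * groupAlgNorm2 y := by
  rcases (norm_nonneg (toL2 y)).eq_or_lt with hy | hy
  · rw [eq_comm, norm_eq_zero, ← map_zero toL2, toL2_injective.eq_iff] at hy
    simp [hy, groupAlgNorm2]
  · rw [groupAlgNorm2_eq_norm_toL2 y, ← div_le_iff₀ hy]
    have hy' : groupAlgNorm2 ((‖toL2 y‖⁻¹ : ℂ) • y) ≤ 1 := by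
      rw [groupAlgNorm2_eq_norm_toL2, map_smul, norm_smul]
      simp [hy.ne']
    simpa [groupAlgNorm2_eq_norm_toL2, norm_smul, div_eq_inv_mul] using
      groupAlgNorm2_mul_le_groupAlgOpNorm (x := x) hy'

theorem groupAlgOpNorm_mul_le (x y : MonoidAlgebra ℂ Γ) :
    groupAlgOpNorm (x * y) ≤ groupAlgOpNorm x * groupAlgOpNorm y := by
  refine groupAlgOpNorm_le fun z hz => ?_
  calc groupAlgNorm2 (x * y * z) ≤ groupAlgOpNorm x * groupAlgNorm2 (y * z) := by
        rw [mul_assoc]; exact groupAlgNorm2_mul_le x _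
    _ ≤ groupAlgOpNorm x * groupAlgOpNorm y := by
        gcongr
        · exact groupAlgOpNorm_nonneg x
        · exact groupAlgNorm2_mul_le_groupAlgOpNorm hz

theorem groupAlgNorm2_le_groupAlgOpNorm (x : MonoidAlgebra ℂ Γ) :
    groupAlgNorm2 x ≤ groupAlgOpNorm x := by
  simpa using groupAlgNorm2_mul_le_groupAlgOpNorm (x := x) groupAlgNorm2_one.le

theorem groupAlgOpNorm_one : groupAlgOpNorm (1 : MonoidAlgebra ℂ Γ) = 1 :=
  le_antisymm (groupAlgOpNorm_le fun y hy => by rwa [one_mul])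
    (groupAlgNorm2_one.symm.trans_le (groupAlgNorm2_le_groupAlgOpNorm 1))

theorem groupAlgOpNorm_pow_le (x : MonoidAlgebra ℂ Γ) (n : ℕ) :
    groupAlgOpNorm (x ^ n) ≤ groupAlgOpNorm x ^ n := by
  induction n with
  | zero => simp [groupAlgOpNorm_one]
  | succ n ih =>
    rw [pow_succ, pow_succ]
    exact (groupAlgOpNorm_mul_le _ _).trans
      (mul_le_mul_of_nonneg_right ih (groupAlgOpNorm_nonneg x))

theorem groupAlgOpNorm_sq_le_star_mul_self (x : MonoidAlgebra ℂ Γ) :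
    groupAlgOpNorm x ^ 2 ≤ groupAlgOpNorm (star x * x) := by
  have h0 := groupAlgOpNorm_nonneg (star x * x)
  suffices groupAlgOpNorm x ≤ √(groupAlgOpNorm (star x * x)) from
    (Real.le_sqrt (groupAlgOpNorm_nonneg x) h0).mp this
  refine groupAlgOpNorm_le fun y hy => (Real.le_sqrt (Real.sqrt_nonneg _) h0).mpr ?_
  calc groupAlgNorm2 (x * y) ^ 2 ≤ groupAlgNorm2 y * groupAlgNorm2 (star x * x * y) :=
        groupAlgNorm2_mul_sq_le x y
    _ ≤ 1 * groupAlgOpNorm (star x * x) :=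
        mul_le_mul hy (groupAlgNorm2_mul_le_groupAlgOpNorm hy) (groupAlgNorm2_nonneg _) zero_le_one
    _ = groupAlgOpNorm (star x * x) := one_mul _

theorem groupAlgOpNorm_le_groupAlgOpNorm_star (x : MonoidAlgebra ℂ Γ) :
    groupAlgOpNorm x ≤ groupAlgOpNorm (star x) := by
  rcases (groupAlgOpNorm_nonneg x).eq_or_lt with h0 | hpos
  · exact h0 ▸ groupAlgOpNorm_nonneg _
  · refine le_of_mul_le_mul_right ?_ hpos
    calc groupAlgOpNorm x * groupAlgOpNorm x = groupAlgOpNorm x ^ 2 := (sq _).symm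
      _ ≤ groupAlgOpNorm (star x * x) := groupAlgOpNorm_sq_le_star_mul_self x
      _ ≤ groupAlgOpNorm (star x) * groupAlgOpNorm x := groupAlgOpNorm_mul_le _ _

theorem groupAlgOpNorm_star (x : MonoidAlgebra ℂ Γ) : groupAlgOpNorm (star x) = groupAlgOpNorm x :=
  le_antisymm (by simpa using groupAlgOpNorm_le_groupAlgOpNorm_star (star x))
    (groupAlgOpNorm_le_groupAlgOpNorm_star x)

theorem groupAlgOpNorm_star_mul_self (x : MonoidAlgebra ℂ Γ) :
    groupAlgOpNorm (star x * x) = groupAlgOpNorm x ^ 2 :=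
  le_antisymm ((groupAlgOpNorm_mul_le _ _).trans_eq (by rw [groupAlgOpNorm_star, sq]))
    (groupAlgOpNorm_sq_le_star_mul_self x)

theorem IsSelfAdjoint.groupAlgOpNorm_pow_two_pow {a : MonoidAlgebra ℂ Γ}
    (ha : IsSelfAdjoint a) (k : ℕ) : groupAlgOpNorm (a ^ 2 ^ k) = groupAlgOpNorm a ^ 2 ^ k := by
  induction k with
  | zero => simp
  | succ k ih =>
    rw [pow_succ, pow_mul, pow_mul, ← ih, ← groupAlgOpNorm_star_mul_self, (ha.pow _).star_eq, sq]

theorem IsSelfAdjoint.groupAlgOpNorm_pow {a : MonoidAlgebra ℂ Γ} (ha : IsSelfAdjoint a)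
    (n : ℕ) : groupAlgOpNorm (a ^ n) = groupAlgOpNorm a ^ n := by
  refine le_antisymm (groupAlgOpNorm_pow_le a n) ?_
  rcases (groupAlgOpNorm_nonneg a).eq_or_lt with h0 | hpos
  · cases n with
    | zero => simp [groupAlgOpNorm_one]
    | succ n => rw [← h0, zero_pow n.succ_ne_zero]; exact groupAlgOpNorm_nonneg _
  · -- pad `n` up to `2 ^ n`, where the C*-identity gives equality
    have hn : n + (2 ^ n - n) = 2 ^ n := Nat.add_sub_cancel' Nat.lt_two_pow_self.le
    refine le_of_mul_le_mul_right ?_ (pow_pos hpos (2 ^ n - n))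
    calc groupAlgOpNorm a ^ n * groupAlgOpNorm a ^ (2 ^ n - n)
        = groupAlgOpNorm (a ^ n * a ^ (2 ^ n - n)) := by
          rw [← pow_add, ← pow_add, hn, ha.groupAlgOpNorm_pow_two_pow]
      _ ≤ groupAlgOpNorm (a ^ n) * groupAlgOpNorm (a ^ (2 ^ n - n)) := groupAlgOpNorm_mul_le _ _
      _ ≤ groupAlgOpNorm (a ^ n) * groupAlgOpNorm a ^ (2 ^ n - n) :=
          mul_le_mul_of_nonneg_left (groupAlgOpNorm_pow_le a _) (groupAlgOpNorm_nonneg _)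

end OpNorm

section Hom

variable {Γ G : Type*} [Group Γ] [Group G] (φ : Γ →* G)

theorem groupAlgMap_eq_mapDomainRingHom : groupAlgMap φ = mapDomainRingHom ℂ φ := rfl

theorem groupAlgMap_star (x : MonoidAlgebra ℂ Γ) :
    groupAlgMap φ (star x) = star (groupAlgMap φ x) := by
  rw [groupAlgMap_eq_mapDomainRingHom]
  induction x using induction_linear with
  | zero => simp
  | add x y hx hy => simp only [star_add, map_add, hx, hy]
  | single g c => simp [star_single, mapDomain_single]

theorem groupAlgNorm2_groupAlgMap {x : MonoidAlgebra ℂ Γ} (h : Set.InjOn φ x.coeff.support) :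
    groupAlgNorm2 (groupAlgMap φ x) = groupAlgNorm2 x := by
  classical
  rw [groupAlgNorm2, groupAlgNorm2, groupAlgMap, coeff_ofCoeff,
    Finsupp.mapDomain_support_of_injOn _ h, Finset.sum_image h]
  congr 1
  refine Finset.sum_congr rfl fun g hg => ?_
  rw [Finsupp.mapDomain_apply' _ _ subset_rfl h hg]

theorem support_groupAlgMap_subset [DecidableEq G] (x : MonoidAlgebra ℂ Γ) :
    (groupAlgMap φ x).coeff.support ⊆ x.coeff.support.image φ :=
  Finsupp.mapDomain_support

end Hom

section Support

variable {Γ : Type*} [Group Γ] {T : Set Γ} {x y : MonoidAlgebra ℂ Γ} {r s : ℝ}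

theorem support_mul_subset_wordBall (hx : ↑x.coeff.support ⊆ wordBall T r)
    (hy : ↑y.coeff.support ⊆ wordBall T s) : ↑(x * y).coeff.support ⊆ wordBall T (r + s) := by
  classical
  intro g hg
  obtain ⟨a, ha, b, hb, rfl⟩ := Finset.mem_mul.mp (support_coeff_mul_subset x y hg)
  exact mul_mem_wordBall (hx ha) (hy hb)

theorem support_star_subset_wordBall (hx : ↑x.coeff.support ⊆ wordBall T r) :
    ↑(star x).coeff.support ⊆ wordBall T r := by
  intro g hg
  have : g⁻¹ ∈ x.coeff.support := by simpa using hg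
  simpa using inv_mem_wordBall (hx this)

theorem support_one_subset_wordBall (hr : 0 ≤ r) :
    ↑(1 : MonoidAlgebra ℂ Γ).coeff.support ⊆ wordBall T r := by
  intro g hg
  obtain rfl : g = 1 := by simpa [one_def] using hg
  exact one_mem_wordBall hr

theorem support_pow_subset_wordBall (hx : ↑x.coeff.support ⊆ wordBall T r) (n : ℕ) :
    ↑(x ^ n).coeff.support ⊆ wordBall T (n * r) := by
  induction n with
  | zero => simpa using support_one_subset_wordBall le_rfl
  | succ n ih => simpa [pow_succ, add_mul] using support_mul_subset_wordBall ih hx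

end Support

section RapidDecay

variable {Γ G : Type*} [Group Γ] [Group G] {X : Set G} {P : Polynomial ℝ}

theorem RapidDecayWith.one_le_eval (hRD : RapidDecayWith X P) (r : ℕ) : 1 ≤ P.eval (r : ℝ) := by
  have h := hRD r 1 (support_one_subset_wordBall r.cast_nonneg)
  rwa [groupAlgOpNorm_one, groupAlgNorm2_one, mul_one] at h

theorem RapidDecayWith.groupAlgOpNorm_groupAlgMap_le (hRD : RapidDecayWith X P) {φ : Γ →* G}
    {S : Set Γ} {r : ℕ} (hinj : Set.InjOn φ S) (himg : φ '' S ⊆ wordBall X r)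
    {x : MonoidAlgebra ℂ Γ} (hx : ↑x.coeff.support ⊆ S) :
    groupAlgOpNorm (groupAlgMap φ x) ≤ P.eval (r : ℝ) * groupAlgNorm2 x := by
  classical
  have hsupp : ↑(groupAlgMap φ x).coeff.support ⊆ wordBall X r := by
    intro g hg
    obtain ⟨a, ha, rfl⟩ := Finset.mem_image.mp (support_groupAlgMap_subset φ x hg)
    exact himg ⟨a, hx ha, rfl⟩
  simpa [groupAlgNorm2_groupAlgMap φ (hinj.mono hx)] using hRD r _ hsupp

end RapidDecay

theorem rapidDecay_norm_estimate_general {Γ G : Type*} [Group Γ] [Group G]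
    (Y : Set Γ) (X : Set G) (P : Polynomial ℝ) (hRD : RapidDecayWith X P)
    (R m : ℕ) (r' : ℕ) (φ : Γ →* G)
    (hinj : Set.InjOn φ (wordBall Y (2 * m * R)))
    (himg : ⇑φ '' wordBall Y (2 * m * R) ⊆ wordBall X r')
    (x : MonoidAlgebra ℂ Γ) (hx : (↑x.coeff.support : Set Γ) ⊆ wordBall Y R) :
    groupAlgOpNorm (groupAlgMap φ x) ^ (2 * m) ≤
      P.eval (r' : ℝ) * groupAlgOpNorm x ^ (2 * m) := by
  set w := star x * x
  have hw : ↑(w ^ m).coeff.support ⊆ wordBall Y (2 * m * R) := by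
    convert support_pow_subset_wordBall
      (support_mul_subset_wordBall (support_star_subset_wordBall hx) hx) m using 2
    ring
  have hP : 0 ≤ P.eval (r' : ℝ) := zero_le_one.trans (hRD.one_le_eval r')
  calc groupAlgOpNorm (groupAlgMap φ x) ^ (2 * m)
      = groupAlgOpNorm (groupAlgMap φ (w ^ m)) := by
        rw [pow_mul, ← groupAlgOpNorm_star_mul_self,
          ← (IsSelfAdjoint.star_mul_self _).groupAlgOpNorm_pow, ← groupAlgMap_star,
          groupAlgMap_eq_mapDomainRingHom, ← map_mul, ← map_pow]
    _ ≤ P.eval (r' : ℝ) * groupAlgNorm2 (w ^ m) := hRD.groupAlgOpNorm_groupAlgMap_le hinj himg hw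
    _ ≤ P.eval (r' : ℝ) * groupAlgOpNorm (w ^ m) := by
        gcongr; exact groupAlgNorm2_le_groupAlgOpNorm _
    _ = P.eval (r' : ℝ) * groupAlgOpNorm x ^ (2 * m) := by
        rw [(IsSelfAdjoint.star_mul_self x).groupAlgOpNorm_pow, groupAlgOpNorm_star_mul_self,
          pow_mul]

/-- The key rapid-decay estimate: if `φ : Γ → G` is injective on `B_Y(2mR)` and maps
`B_Y(2mR)` into `B_X(r')`, and `(G, X)` has rapid decay with polynomial `P`, then for
every `x ∈ ℂΓ` supported on `B_Y(R)` one has `‖φ(x)‖^{2m} ≤ P(r')·‖x‖^{2m}`. -/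
theorem rapidDecay_norm_estimate {Γ G : Type*} [Group Γ] [Group G]
    [Countable Γ] [Countable G]
    (Y : Set Γ) (hYfin : Y.Finite) (hYgen : Subgroup.closure Y = ⊤)
    (X : Set G) (hXfin : X.Finite) (hXgen : Subgroup.closure X = ⊤)
    (P : Polynomial ℝ) (hRD : RapidDecayWith X P)
    (R m : ℕ) (hR : 1 ≤ R) (hm : 1 ≤ m) (r' : ℕ)
    (φ : Γ →* G)
    (hinj : Set.InjOn φ (wordBall Y (2 * m * R)))
    (himg : ⇑φ '' wordBall Y (2 * m * R) ⊆ wordBall X r')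
    (x : MonoidAlgebra ℂ Γ) (hx : (↑x.coeff.support : Set Γ) ⊆ wordBall Y R) :
    groupAlgOpNorm (groupAlgMap φ x) ^ (2 * m) ≤
      P.eval (r' : ℝ) * groupAlgOpNorm x ^ (2 * m) :=
  rapidDecay_norm_estimate_general Y X P hRD R m r' φ hinj himg x hx
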